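/- arXiv:1305.0685 — 4 statements merged into one kernel-verified Lean document; each statement's English description precedes it below -/
import Mathlib

section
/- The module M(s,ε) is an irreducible sl₂-module: if W is a nonzero subspace of M(s,ε) closed under the actions of E, F, and H, then W = M(s,ε). -/
/-! The weight operator `H` acts diagonally with pairwise distinct eigenvalues, so applying to a
nonzero `w ∈ W` a Lagrange interpolation polynomial in `H` isolates a single weight vector
`v_n ∈ W`. The hypothesis on `s` says exactly that no coefficient `(s ± n + 1)/2` of `E` or `F`
vanishes, so `E` and `F` move `v_n` up and down through every basis vector, which span. -/

/- The basis vector `Finsupp.single k 1` represents v_{ε+2k}. -/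

noncomputable def Eop (s : ℂ) (ε : ℤ) : (ℤ →₀ ℂ) →ₗ[ℂ] (ℤ →₀ ℂ) :=
  Finsupp.lsum ℂ fun k : ℤ =>
    ((s + ((ε : ℂ) + 2 * (k : ℂ)) + 1) / 2) • Finsupp.lsingle (k + 1)

noncomputable def Fop (s : ℂ) (ε : ℤ) : (ℤ →₀ ℂ) →ₗ[ℂ] (ℤ →₀ ℂ) :=
  Finsupp.lsum ℂ fun k : ℤ =>
    ((s - ((ε : ℂ) + 2 * (k : ℂ)) + 1) / 2) • Finsupp.lsingle (k - 1)

noncomputable def Hop (ε : ℤ) : (ℤ →₀ ℂ) →ₗ[ℂ] (ℤ →₀ ℂ) :=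
  Finsupp.lsum ℂ fun k : ℤ =>
    ((ε : ℂ) + 2 * (k : ℂ)) • Finsupp.lsingle k

open Finsupp Polynomial

theorem Finsupp.single_apply_mem_of_le_comap_of_diagonal {K ι : Type*} [Field K]
    {f : Module.End K (ι →₀ K)} {μ : ι → K} (hμ : Function.Injective μ)
    (hf : ∀ i, f (single i 1) = μ i • single i 1) {W : Submodule K (ι →₀ K)}
    (hW : W ≤ W.comap f) {w : ι →₀ K} (hw : w ∈ W) (i : ι) : single i (w i) ∈ W := by
  classical
  by_cases hi : i ∈ w.support
  swap
  · rw [notMem_support_iff.1 hi, single_zero]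
    exact W.zero_mem
  set p := Lagrange.basis w.support μ i
  have aeval_single : ∀ j c, aeval f p (single j c) = p.eval (μ j) • single j c := by
    intro j c
    rcases eq_or_ne c 0 with rfl | hc
    · simp
    refine Module.End.aeval_apply_of_hasEigenvector ⟨Module.End.mem_eigenspace_iff.2 ?_, ?_⟩
    · rw [← smul_single_one, map_smul, hf, smul_comm]
    · simpa using hc
  have isolate : aeval f p w = single i (w i) := by
    conv_lhs => rw [← w.sum_single]
    rw [map_finsuppSum, Finsupp.sum, Finset.sum_eq_single i]
    · rw [aeval_single, Lagrange.eval_basis_self hμ.injOn hi, one_smul]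
    · intro j hj hji
      rw [aeval_single, Lagrange.eval_basis_of_ne hji.symm hj, zero_smul]
    · exact fun h => absurd hi h
  exact isolate ▸ aeval_apply_smul_mem_of_le_comap hw p f hW

theorem Finsupp.eq_top_of_single_one_mem_of_succ_of_pred {R : Type*} [Semiring R]
    {W : Submodule R (ℤ →₀ R)} (k₀ : ℤ) (h₀ : single k₀ 1 ∈ W)
    (succ : ∀ k, single k 1 ∈ W → single (k + 1) 1 ∈ W)
    (pred : ∀ k, single k 1 ∈ W → single (k - 1) 1 ∈ W) : W = ⊤ := by
  have hall : ∀ k, single k (1 : R) ∈ W := fun k =>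
    Int.inductionOn' k k₀ h₀ (fun k _ => succ k) (fun k _ => pred k)
  rw [eq_top_iff, ← Finsupp.basisSingleOne.span_eq, Submodule.span_le]
  rintro _ ⟨k, rfl⟩
  simpa using hall k

section

variable (s : ℂ) (ε : ℤ)

theorem Hop_single (k : ℤ) : Hop ε (single k 1) = ((ε : ℂ) + 2 * k) • single k 1 := by
  rw [Hop, lsum_single, LinearMap.smul_apply, lsingle_apply]

theorem Eop_single (k : ℤ) :
    Eop s ε (single k 1) = ((s + ((ε : ℂ) + 2 * k) + 1) / 2) • single (k + 1) 1 := by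
  rw [Eop, lsum_single, LinearMap.smul_apply, lsingle_apply]

theorem Fop_single (k : ℤ) :
    Fop s ε (single k 1) = ((s - ((ε : ℂ) + 2 * k) + 1) / 2) • single (k - 1) 1 := by
  rw [Fop, lsum_single, LinearMap.smul_apply, lsingle_apply]

variable {s ε}

theorem Eop_coeff_ne_zero (hs : ∀ k : ℤ, s - (ε : ℂ) ≠ 2 * (k : ℂ) + 1) (k : ℤ) :
    (s + ((ε : ℂ) + 2 * k) + 1) / 2 ≠ 0 := by
  intro h
  apply hs (-ε - k - 1)
  push_cast
  linear_combination 2 * h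

theorem Fop_coeff_ne_zero (hs : ∀ k : ℤ, s - (ε : ℂ) ≠ 2 * (k : ℂ) + 1) (k : ℤ) :
    (s - ((ε : ℂ) + 2 * k) + 1) / 2 ≠ 0 := by
  intro h
  apply hs (k - 1)
  push_cast
  linear_combination 2 * h

end

theorem stmt0_general (s : ℂ) (ε : ℤ)
    (hs : ∀ k : ℤ, s - (ε : ℂ) ≠ 2 * (k : ℂ) + 1)
    (W : Submodule ℂ (ℤ →₀ ℂ))
    (hE : ∀ w ∈ W, Eop s ε w ∈ W)
    (hF : ∀ w ∈ W, Fop s ε w ∈ W)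
    (hH : ∀ w ∈ W, Hop ε w ∈ W)
    (hW : W ≠ ⊥) : W = ⊤ := by
  obtain ⟨w, hwW, hw0⟩ := W.exists_mem_ne_zero_of_ne_bot hW
  obtain ⟨k₀, hk₀⟩ := support_nonempty_iff.2 hw0
  have hweight_inj : Function.Injective fun k : ℤ => (ε : ℂ) + 2 * k := by
    intro a b h
    simpa using h
  have hweight := single_apply_mem_of_le_comap_of_diagonal hweight_inj (Hop_single ε) hH hwW k₀
  rw [← smul_single_one, W.smul_mem_iff (mem_support_iff.1 hk₀)] at hweight
  refine eq_top_of_single_one_mem_of_succ_of_pred k₀ hweight (fun k hk => ?_) (fun k hk => ?_)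
  · have := hE _ hk
    rwa [Eop_single, W.smul_mem_iff (Eop_coeff_ne_zero hs k)] at this
  · have := hF _ hk
    rwa [Fop_single, W.smul_mem_iff (Fop_coeff_ne_zero hs k)] at this

/-- M(s,ε) is irreducible: any nonzero subspace closed under E, F, H is everything. -/
theorem stmt0 (s : ℂ) (ε : ℤ) (hε : ε = 0 ∨ ε = 1)
    (hs : ∀ k : ℤ, s - (ε : ℂ) ≠ 2 * (k : ℂ) + 1)
    (W : Submodule ℂ (ℤ →₀ ℂ))
    (hE : ∀ w ∈ W, Eop s ε w ∈ W)
    (hF : ∀ w ∈ W, Fop s ε w ∈ W)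
    (hH : ∀ w ∈ W, Hop ε w ∈ W)
    (hW : W ≠ ⊥) : W = ⊤ :=
  stmt0_general s ε hs W hE hF hH hW
end

section
/- The operators L₊ and L₋ on the space of functions a : ℤ² → ℂ satisfy the commutation relation [L₊, L₋] = 2(L₊ - L₋), so they span a two-dimensional solvable Lie algebra. -/
/-- (L₊a)(n,m) = (p+n)a(n+2,m) + (s+m)a(n,m+2) + (r-n-m)a(n,m) -/
def Lp (p s r : ℂ) (a : ℤ × ℤ → ℂ) : ℤ × ℤ → ℂ := fun z =>
  (p + (z.1 : ℂ)) * a (z.1 + 2, z.2) + (s + (z.2 : ℂ)) * a (z.1, z.2 + 2) +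
    (r - (z.1 : ℂ) - (z.2 : ℂ)) * a z

/-- (L₋a)(n,m) = (p-n)a(n-2,m) + (s-m)a(n,m-2) + (r+n+m)a(n,m) -/
def Lm (p s r : ℂ) (a : ℤ × ℤ → ℂ) : ℤ × ℤ → ℂ := fun z =>
  (p - (z.1 : ℂ)) * a (z.1 - 2, z.2) + (s - (z.2 : ℂ)) * a (z.1, z.2 - 2) +
    (r + (z.1 : ℂ) + (z.2 : ℂ)) * a z

/-- The commutation relation [L₊, L₋] = 2(L₊ - L₋). -/
theorem stmt4 (p s r : ℂ) (a : ℤ × ℤ → ℂ) (z : ℤ × ℤ) :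
    Lp p s r (Lm p s r a) z - Lm p s r (Lp p s r a) z
      = 2 * (Lp p s r a z - Lm p s r a z) := by
  simp only [Lp, Lm, add_sub_cancel_right, sub_add_cancel, Int.cast_add, Int.cast_sub,
    Int.cast_ofNat]
  ring
end

section
/- If a function a : ℤ² → ℂ satisfies the two difference equations (s₁+n+1)a(n+2,m) + (s₂+m+1)a(n,m+2) + (s₃-n-m-1)a(n,m) = 0 and (s₁-n+1)a(n-2,m) + (s₂-m+1)a(n,m-2) + (s₃+n+m-1)a(n,m) = 0 for all n,m, then it satisfies the second-order diagonal equation (s₁-n+1)(s₂+m+1)a(n-2,m+2) - (s₃² - s₁² - s₂² - 2nm + 1)a(n,m) + (s₁+n+1)(s₂-m+1)a(n+2,m-2) = 0. -/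
theorem diagonal_recurrence_of_contiguity {R : Type*} [CommRing R] (s₁ s₂ s₃ : R)
    (a : ℤ → ℤ → R)
    (h1 : ∀ n m : ℤ, (s₁ + (n : R) + 1) * a (n + 2) m + (s₂ + (m : R) + 1) * a n (m + 2)
        + (s₃ - (n : R) - (m : R) - 1) * a n m = 0)
    (h2 : ∀ n m : ℤ, (s₁ - (n : R) + 1) * a (n - 2) m + (s₂ - (m : R) + 1) * a n (m - 2)
        + (s₃ + (n : R) + (m : R) - 1) * a n m = 0)
    (n m : ℤ) :
    (s₁ - (n : R) + 1) * (s₂ + (m : R) + 1) * a (n - 2) (m + 2)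
        - (s₃ ^ 2 - s₁ ^ 2 - s₂ ^ 2 - 2 * (n : R) * (m : R) + 1) * a n m
        + (s₁ + (n : R) + 1) * (s₂ - (m : R) + 1) * a (n + 2) (m - 2) = 0 := by
  have down_n := h2 (n + 2) m
  have up := h1 n m
  have down_m := h2 n (m + 2)
  rw [add_sub_cancel_right] at down_n down_m
  push_cast at down_n down_m
  -- the multipliers are chosen to cancel the terms in `a (n + 2) m` and `a n (m + 2)`
  linear_combination (s₁ + (n : R) + 1) * down_n - (s₃ + (n : R) + (m : R) + 1) * up
    + (s₂ + (m : R) + 1) * down_m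

/-- If a : ℤ² → ℂ satisfies the two first-order difference equations (1.3.1),
    (1.3.2), then it satisfies the second-order diagonal equation (1.3.3). -/
theorem stmt6 (s₁ s₂ s₃ : ℂ) (a : ℤ → ℤ → ℂ)
    (h1 : ∀ n m : ℤ, (s₁ + (n : ℂ) + 1) * a (n + 2) m + (s₂ + (m : ℂ) + 1) * a n (m + 2)
        + (s₃ - (n : ℂ) - (m : ℂ) - 1) * a n m = 0)
    (h2 : ∀ n m : ℤ, (s₁ - (n : ℂ) + 1) * a (n - 2) m + (s₂ - (m : ℂ) + 1) * a n (m - 2)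
        + (s₃ + (n : ℂ) + (m : ℂ) - 1) * a n m = 0) :
    ∀ n m : ℤ, (s₁ - (n : ℂ) + 1) * (s₂ + (m : ℂ) + 1) * a (n - 2) (m + 2)
        - (s₃ ^ 2 - s₁ ^ 2 - s₂ ^ 2 - 2 * (n : ℂ) * (m : ℂ) + 1) * a n m
        + (s₁ + (n : ℂ) + 1) * (s₂ - (m : ℂ) + 1) * a (n + 2) (m - 2) = 0 :=
  diagonal_recurrence_of_contiguity s₁ s₂ s₃ a h1 h2
end

section
/- The key q-identity: for all complex s₃ and integers n, m, [(s₃-n-m+1)/2]_q [(s₃+n+m-1)/2]_q - q^{-m}[(s₁+n-1)/2]_q [(s₁-n+1)/2]_q - q^{n}[(s₂-m+1)/2]_q [(s₂+m-1)/2]_q + q^{-m}[(s₁+n+1)/2]_q [(s₁-n-1)/2]_q + q^{n}[(s₂+m+1)/2]_q [(s₂-m-1)/2]_q = [(s₃+n+m+1)/2]_q [(s₃-n-m-1)/2]_q, where [x]_q = (q^x - q^{-x})/(q - q^{-1}). -/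
noncomputable def qpow (lq x : ℂ) : ℂ := Complex.exp (x * lq)

/-- [x]_q = (q^x - q^{-x})/(q - q⁻¹). -/
noncomputable def qnum (q lq x : ℂ) : ℂ := (qpow lq x - qpow lq (-x)) / (q - q⁻¹)

/-
Write `P(s, a) = [(s + a)/2]_q [(s - a)/2]_q`. Multiplying out,
`(q - q⁻¹)² P(s, a) = q^s + q^{-s} - q^a - q^{-a}`, so the `s`-dependence cancels in
`P(s, a - 1) - P(s, a + 1) = [1]_q [a]_q`. The identity is therefore
`[1]_q [n + m]_q = q^{-m} [1]_q [n]_q + q^n [1]_q [m]_q`, which is the q-addition formula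
`[n + m]_q = q^{-m} [n]_q + q^n [m]_q`.
-/

theorem qpow_add (lq x y : ℂ) : qpow lq (x + y) = qpow lq x * qpow lq y := by
  simp only [qpow, add_mul, Complex.exp_add]

theorem qnum_mul_qnum (q lq x y : ℂ) :
    qnum q lq x * qnum q lq y =
      (qpow lq (x + y) + qpow lq (-(x + y)) - qpow lq (x - y) - qpow lq (y - x)) / (q - q⁻¹) ^ 2 := by
  rw [qnum, qnum, div_mul_div_comm, sq]
  congr 1
  simp only [sub_mul, mul_sub, ← qpow_add]
  ring_nf

theorem qnum_mul_qnum_sub_qnum_mul_qnum (q lq s a : ℂ) :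
    qnum q lq ((s + a - 1) / 2) * qnum q lq ((s - a + 1) / 2)
      - qnum q lq ((s + a + 1) / 2) * qnum q lq ((s - a - 1) / 2)
      = qnum q lq 1 * qnum q lq a := by
  simp only [qnum_mul_qnum, div_sub_div_same]
  ring_nf

theorem qpow_neg_mul_qnum_add_qpow_mul_qnum (q lq x y : ℂ) :
    qpow lq (-y) * qnum q lq x + qpow lq x * qnum q lq y = qnum q lq (x + y) := by
  simp only [qnum, mul_div_assoc', ← add_div]
  congr 1
  simp only [mul_sub, ← qpow_add]
  ring_nf

theorem stmt14_general (q lq s₁ s₂ s₃ : ℂ) (n m : ℤ) :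
    qnum q lq ((s₃ - (n : ℂ) - (m : ℂ) + 1) / 2) * qnum q lq ((s₃ + (n : ℂ) + (m : ℂ) - 1) / 2)
      - qpow lq (-(m : ℂ)) * qnum q lq ((s₁ + (n : ℂ) - 1) / 2) * qnum q lq ((s₁ - (n : ℂ) + 1) / 2)
      - qpow lq (n : ℂ) * qnum q lq ((s₂ - (m : ℂ) + 1) / 2) * qnum q lq ((s₂ + (m : ℂ) - 1) / 2)
      + qpow lq (-(m : ℂ)) * qnum q lq ((s₁ + (n : ℂ) + 1) / 2) * qnum q lq ((s₁ - (n : ℂ) - 1) / 2)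
      + qpow lq (n : ℂ) * qnum q lq ((s₂ + (m : ℂ) + 1) / 2) * qnum q lq ((s₂ - (m : ℂ) - 1) / 2)
    = qnum q lq ((s₃ + (n : ℂ) + (m : ℂ) + 1) / 2) * qnum q lq ((s₃ - (n : ℂ) - (m : ℂ) - 1) / 2) := by
  have h₁ := qnum_mul_qnum_sub_qnum_mul_qnum q lq s₁ n
  have h₂ := qnum_mul_qnum_sub_qnum_mul_qnum q lq s₂ m
  have h₃ := qnum_mul_qnum_sub_qnum_mul_qnum q lq s₃ (n + m)
  have hadd := qpow_neg_mul_qnum_add_qpow_mul_qnum q lq n m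
  linear_combination (norm := ring_nf)
    h₃ - qpow lq (-(m : ℂ)) * h₁ - qpow lq (n : ℂ) * h₂ - qnum q lq 1 * hadd

/-- The key q-identity used in the proof of Lemma 2.5. -/
theorem stmt14 (q lq s₁ s₂ s₃ : ℂ) (hq0 : q ≠ 0) (hq1 : q ≠ 1) (hq2 : q ≠ -1)
    (hlq : Complex.exp lq = q) (n m : ℤ) :
    qnum q lq ((s₃ - (n : ℂ) - (m : ℂ) + 1) / 2) * qnum q lq ((s₃ + (n : ℂ) + (m : ℂ) - 1) / 2)
      - qpow lq (-(m : ℂ)) * qnum q lq ((s₁ + (n : ℂ) - 1) / 2) * qnum q lq ((s₁ - (n : ℂ) + 1) / 2)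
      - qpow lq (n : ℂ) * qnum q lq ((s₂ - (m : ℂ) + 1) / 2) * qnum q lq ((s₂ + (m : ℂ) - 1) / 2)
      + qpow lq (-(m : ℂ)) * qnum q lq ((s₁ + (n : ℂ) + 1) / 2) * qnum q lq ((s₁ - (n : ℂ) - 1) / 2)
      + qpow lq (n : ℂ) * qnum q lq ((s₂ + (m : ℂ) + 1) / 2) * qnum q lq ((s₂ - (m : ℂ) - 1) / 2)
    = qnum q lq ((s₃ + (n : ℂ) + (m : ℂ) + 1) / 2) * qnum q lq ((s₃ - (n : ℂ) - (m : ℂ) - 1) / 2) :=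
  stmt14_general q lq s₁ s₂ s₃ n m
end
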